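/- For the ferromagnetic q-state Potts model (q ≥ 2, β > 0) on the subgraph induced by a finite d-dimensional cube V ⊂ ℤ^d: (i) the isolated-vertices dynamics I_SW and the isolated-vertices tiled dynamics I_D are both reversible with respect to the Potts measure π and positive semidefinite in L²(π); (ii) for every tiling B_k and every Potts configuration τ on V∖B_k, the conditional isolated-vertices tiled dynamics P_k^τ is reversible with respect to the conditional measure π(·|τ) and positive semidefinite in L²(π(·|τ)). -/

import Mathlib

open scoped BigOperators

attribute [local instance] Classical.propDecidable

/-- Vertices of the `d`-dimensional integer lattice `ℤ^d`. -/
abbrev Vtx (d : ℕ) := Fin d → ℤ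

/-- Graph (ℓ¹) distance on `ℤ^d`. -/
def latDist {d : ℕ} (u v : Vtx d) : ℕ := ∑ i, (u i - v i).natAbs

/-- Nearest-neighbor adjacency on `ℤ^d`. -/
def latAdj {d : ℕ} (u v : Vtx d) : Prop := latDist u v = 1

/-- `V` is a `d`-dimensional cube (axis-aligned box with equal sides) in `ℤ^d`. -/
def IsCube {d : ℕ} (V : Finset (Vtx d)) : Prop :=
  ∃ (x : Vtx d) (s : ℕ), ∀ y : Vtx d, y ∈ V ↔ ∀ i, x i ≤ y i ∧ y i < x i + (s : ℤ)

/-- Spin configurations on `V` with spin set `{1,…,q}`. -/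
abbrev Conf {d : ℕ} (V : Finset (Vtx d)) (q : ℕ) := {x // x ∈ V} → Fin q

/-- Unnormalized Potts weight: `exp(β · #{monochromatic edges of σ})`. -/
noncomputable def pottsWeight {d : ℕ} {V : Finset (Vtx d)} (q : ℕ) (β : ℝ)
    (σ : Conf V q) : ℝ :=
  Real.exp (β * ((∑ u : {x // x ∈ V}, ∑ v : {x // x ∈ V},
    if latAdj u.1 v.1 ∧ σ u = σ v then (1 : ℝ) else 0) / 2))

/-- The ferromagnetic `q`-state Potts measure on the subgraph of `ℤ^d` induced by `V`
(with free boundary): `π(σ) ∝ exp(β·|{e ∈ E : σ monochromatic on e}|)`. -/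
noncomputable def potts {d : ℕ} (q : ℕ) (β : ℝ) (V : Finset (Vtx d)) : Conf V q → ℝ :=
  fun σ => pottsWeight q β σ / ∑ σ' : Conf V q, pottsWeight q β σ'

/-- The set `E(σ)` of monochromatic edges of the configuration `σ`. -/
noncomputable def monoEdges {d : ℕ} {V : Finset (Vtx d)} {q : ℕ} (σ : Conf V q) :
    Finset (Sym2 {x // x ∈ V}) :=
  Finset.univ.filter fun e =>
    ∃ u v : {x // x ∈ V}, e = s(u, v) ∧ latAdj u.1 v.1 ∧ σ u = σ v

/-- The graph on `V` with edge set `A`. -/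
def graphOf {d : ℕ} {V : Finset (Vtx d)} (A : Finset (Sym2 {x // x ∈ V})) :
    SimpleGraph {x // x ∈ V} where
  Adj u v := u ≠ v ∧ s(u, v) ∈ A
  symm := by
    refine ⟨?_⟩
    intro u v h
    exact ⟨h.1.symm, by rw [Sym2.eq_swap]; exact h.2⟩
  loopless := by refine ⟨?_⟩; intro u h; exact h.1 rfl

/-- `c(A)`: the number of connected components of `(V, A)`. -/
noncomputable def compCount {d : ℕ} {V : Finset (Vtx d)}
    (A : Finset (Sym2 {x // x ∈ V})) : ℕ :=
  Nat.card (graphOf A).ConnectedComponent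

/-- The isolated vertices of `(V, A)`. -/
noncomputable def isoVerts {d : ℕ} {V : Finset (Vtx d)}
    (A : Finset (Sym2 {x // x ∈ V})) : Finset {x // x ∈ V} :=
  Finset.univ.filter fun v => ∀ e ∈ A, v ∉ e

/-- The Swendsen–Wang transition matrix:
`SW(σ,σ') = Σ_{A ⊆ E(σ)∩E(σ')} p^{|A|} (1−p)^{|E(σ)∖A|} q^{−c(A)}`, `p = 1 − e^{−β}`. -/
noncomputable def SWmat {d : ℕ} (q : ℕ) (β : ℝ) (V : Finset (Vtx d)) :
    Matrix (Conf V q) (Conf V q) ℝ :=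
  Matrix.of fun σ σ' =>
    ∑ A ∈ (monoEdges σ ∩ monoEdges σ').powerset,
      (1 - Real.exp (-β)) ^ A.card * Real.exp (-β) ^ ((monoEdges σ).card - A.card)
        * ((q : ℝ) ^ compCount A)⁻¹

/-- The isolated-vertices dynamics `I_SW`: add each monochromatic edge independently with
probability `p = 1 − e^{−β}`, then resample uniformly the spins of the isolated vertices. -/
noncomputable def ISWmat {d : ℕ} (q : ℕ) (β : ℝ) (V : Finset (Vtx d)) :
    Matrix (Conf V q) (Conf V q) ℝ :=
  Matrix.of fun σ σ' =>
    ∑ A ∈ (monoEdges σ).powerset,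
      (1 - Real.exp (-β)) ^ A.card * Real.exp (-β) ^ ((monoEdges σ).card - A.card) *
        (if ∀ v : {x // x ∈ V}, v ∉ isoVerts A → σ' v = σ v
         then ((q : ℝ) ^ (isoVerts A).card)⁻¹ else 0)

/-- Variance w.r.t. `μ`. -/
noncomputable def varMu {Ω : Type*} [Fintype Ω] (μ f : Ω → ℝ) : ℝ :=
  ∑ x, (f x - ∑ y, f y * μ y) ^ 2 * μ x

/-- Inner product in `L²(μ)`. -/
noncomputable def innerMu {Ω : Type*} [Fintype Ω] (μ f g : Ω → ℝ) : ℝ :=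
  ∑ x, f x * g x * μ x

/-- Dirichlet form `⟨f, (I − P) f⟩_μ`. -/
noncomputable def dirichletForm {Ω : Type*} [Fintype Ω]
    (μ : Ω → ℝ) (P : Matrix Ω Ω ℝ) (f : Ω → ℝ) : ℝ :=
  ∑ x, f x * (f x - P.mulVec f x) * μ x

/-- Spectral gap of a reversible positive semidefinite chain, via the variational
characterization `λ(P) = min { ⟨f,(I−P)f⟩_μ / Var_μ(f) : Var_μ(f) ≠ 0 }`. -/
noncomputable def gapD {Ω : Type*} [Fintype Ω] (μ : Ω → ℝ) (P : Matrix Ω Ω ℝ) : ℝ :=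
  sInf {r : ℝ | ∃ f : Ω → ℝ, varMu μ f ≠ 0 ∧ r = dirichletForm μ P f / varMu μ f}

/-- The tiling of `V` with offset `x ∈ {0,…,L+2}^d`: the union over `h ∈ ℤ^d` of the
`d`-dimensional cubes of side length `L−1` (volume `L^d`) centered at `x + h(L+3)`,
intersected with `V`. -/
noncomputable def tile {d : ℕ} (V : Finset (Vtx d)) (L : ℕ) (x : Fin d → Fin (L + 3)) :
    Finset (Vtx d) :=
  V.filter fun y => ∃ h : Fin d → ℤ,
    ∀ i, |y i - (x i : ℤ) - h i * ((L : ℤ) + 3)| ≤ ((L : ℤ) - 1) / 2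

/-- The isolated-vertices tiled dynamics `I_D`: add each monochromatic edge independently
with probability `p`, pick a tiling `B_k` uniformly at random among the `(L+3)^d` tilings,
and resample uniformly the spins of the isolated vertices lying in `B_k`. -/
noncomputable def IDmat {d : ℕ} (q : ℕ) (β : ℝ) (V : Finset (Vtx d)) (L : ℕ) :
    Matrix (Conf V q) (Conf V q) ℝ :=
  Matrix.of fun σ σ' =>
    (((L : ℝ) + 3) ^ d)⁻¹ * ∑ x : Fin d → Fin (L + 3), ∑ A ∈ (monoEdges σ).powerset,
      (1 - Real.exp (-β)) ^ A.card * Real.exp (-β) ^ ((monoEdges σ).card - A.card) *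
        (if ∀ v : {y // y ∈ V}, ¬(v ∈ isoVerts A ∧ v.1 ∈ tile V L x) → σ' v = σ v
         then ((q : ℝ) ^ ((isoVerts A).filter fun v => v.1 ∈ tile V L x).card)⁻¹ else 0)

/-- Glue a configuration on `Bk` with a configuration on `V ∖ Bk` into a configuration
on `V`. -/
noncomputable def glue {d q : ℕ} (V Bk : Finset (Vtx d))
    (σ : {x // x ∈ Bk} → Fin q) (τ : {x // x ∈ V \ Bk} → Fin q) : Conf V q :=
  fun v => if h : v.1 ∈ Bk then σ ⟨v.1, h⟩ else τ ⟨v.1, Finset.mem_sdiff.mpr ⟨v.2, h⟩⟩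

/-- The conditional Potts measure `π(·|τ)` on configurations of `Bk`, given the
configuration `τ` on `V ∖ Bk`. -/
noncomputable def pottsCond {d : ℕ} (q : ℕ) (β : ℝ) (V Bk : Finset (Vtx d))
    (τ : {x // x ∈ V \ Bk} → Fin q) : ({x // x ∈ Bk} → Fin q) → ℝ :=
  fun σ => potts q β V (glue V Bk σ τ) /
    ∑ σ' : {x // x ∈ Bk} → Fin q, potts q β V (glue V Bk σ' τ)

/-- The conditional isolated-vertices tiled dynamics `P_k^τ` acting on configurations of
`Bk`, with `τ` the fixed configuration on `V ∖ Bk`: add each edge monochromatic in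
`σ ∪ τ` independently with probability `p`, then resample uniformly each resulting
isolated vertex lying in `Bk`. -/
noncomputable def condIso {d : ℕ} (q : ℕ) (β : ℝ) (V Bk : Finset (Vtx d))
    (τ : {x // x ∈ V \ Bk} → Fin q) :
    Matrix ({x // x ∈ Bk} → Fin q) ({x // x ∈ Bk} → Fin q) ℝ :=
  Matrix.of fun σ σ' =>
    ∑ A ∈ (monoEdges (glue V Bk σ τ)).powerset,
      (1 - Real.exp (-β)) ^ A.card
        * Real.exp (-β) ^ ((monoEdges (glue V Bk σ τ)).card - A.card) *
        (if ∀ w : {x // x ∈ Bk}, (¬∃ v ∈ isoVerts A, v.1 = w.1) → σ' w = σ w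
         then ((q : ℝ) ^ ((isoVerts A).filter fun v => v.1 ∈ Bk).card)⁻¹ else 0)

/-!
All three dynamics open each monochromatic edge independently with probability
`p = 1 - e^{-β}` and then resample the spins of a set of isolated vertices determined by the
open edge set `A`. Since `π(σ) ∝ e^{β|E(σ)|}` and
`e^{β|E(σ)|} p^{|A|} (1-p)^{|E(σ)|-|A|} = (e^β - 1)^{|A|}`, the flow `π(σ) P(σ, σ')` is
`∑_A w_A 1[A ⊆ E(σ)] 1[σ = σ' off the resampled set]` with `w_A ≥ 0`. An edge of `A` has no
isolated endpoint, so `A ⊆ E(σ)` only depends on the spins that are not resampled; hence each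
summand is symmetric, and it is the Gram matrix of the indicators of the classes of
"agreeing off the resampled set" (restricted to `A ⊆ E(σ)`), so it is positive semidefinite.
The tiled dynamics is an average of such kernels, one per tiling.
-/

open Finset

section ReversibleKernel

variable {Ω : Type*}

def IsReversible (μ : Ω → ℝ) (M : Matrix Ω Ω ℝ) : Prop :=
  ∀ σ σ', μ σ * M σ σ' = μ σ' * M σ' σ

def IsPosSemidefIn [Fintype Ω] (μ : Ω → ℝ) (M : Matrix Ω Ω ℝ) : Prop :=
  ∀ f : Ω → ℝ, 0 ≤ innerMu μ f (M.mulVec f)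

lemma innerMu_smul_sum [Fintype Ω] {ι : Type*} (μ f : Ω → ℝ) (s : Finset ι) (c : ℝ)
    (g : ι → Ω → ℝ) :
    innerMu μ f (c • ∑ x ∈ s, g x) = c * ∑ x ∈ s, innerMu μ f (g x) := by
  simp only [innerMu, Pi.smul_apply, Finset.sum_apply, smul_eq_mul, Finset.mul_sum,
    Finset.sum_mul]
  rw [Finset.sum_comm]
  exact sum_congr rfl fun _ _ => sum_congr rfl fun _ _ => by ring

lemma IsReversible.smul_sum {ι : Type*} {μ : Ω → ℝ} {M : ι → Matrix Ω Ω ℝ} (s : Finset ι)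
    (c : ℝ) (h : ∀ x ∈ s, IsReversible μ (M x)) : IsReversible μ (c • ∑ x ∈ s, M x) := by
  refine fun σ σ' => ?_
  simp only [Matrix.smul_apply, Matrix.sum_apply, smul_eq_mul, Finset.mul_sum]
  exact sum_congr rfl fun x hx => by rw [mul_left_comm, h x hx σ σ', mul_left_comm]

lemma IsPosSemidefIn.smul_sum [Fintype Ω] {ι : Type*} {μ : Ω → ℝ} {M : ι → Matrix Ω Ω ℝ}
    (s : Finset ι) {c : ℝ} (hc : 0 ≤ c) (h : ∀ x ∈ s, IsPosSemidefIn μ (M x)) :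
    IsPosSemidefIn μ (c • ∑ x ∈ s, M x) := by
  refine fun f => ?_
  rw [Matrix.smul_mulVec, Matrix.sum_mulVec, innerMu_smul_sum]
  exact mul_nonneg hc (sum_nonneg fun x hx => h x hx f)

lemma sum_sum_ite_eq_mul_nonneg [Fintype Ω] {κ : Type*} [DecidableEq κ] (r : Ω → κ)
    (g : Ω → ℝ) :
    0 ≤ ∑ σ, ∑ σ', if r σ = r σ' then g σ * g σ' else 0 := by
  have hfibre : ∀ σ, (∑ σ', if r σ = r σ' then g σ * g σ' else 0)
      = g σ * ∑ σ' with r σ' = r σ, g σ' := fun σ => by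
    rw [Finset.sum_filter, Finset.mul_sum]
    exact sum_congr rfl fun σ' _ => by simp only [eq_comm, mul_ite, mul_zero]
  calc 0 ≤ ∑ b ∈ univ.image r, (∑ σ with r σ = b, g σ) ^ 2 :=
        sum_nonneg fun _ _ => sq_nonneg _
    _ = ∑ b ∈ univ.image r, ∑ σ with r σ = b, g σ * ∑ σ' with r σ' = r σ, g σ' := by
      refine sum_congr rfl fun b _ => ?_
      rw [sq, Finset.sum_mul]
      exact sum_congr rfl fun σ hσ => by rw [(mem_filter.1 hσ).2]
    _ = _ := by
      rw [sum_fiberwise_of_maps_to fun σ _ => mem_image_of_mem r (mem_univ σ)]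
      simp_rw [hfibre]

variable {J : Type*} [Fintype J] {B : J → Type*} [∀ j, DecidableEq (B j)]
  {G : J → Ω → Prop} [∀ j σ, Decidable (G j σ)]

lemma isReversible_of_mul_eq_sum {μ : Ω → ℝ} {M : Matrix Ω Ω ℝ} (r : ∀ j, Ω → B j)
    (w : J → ℝ) (hG : ∀ j σ σ', r j σ = r j σ' → G j σ → G j σ')
    (hM : ∀ σ σ', μ σ * M σ σ' = ∑ j, if G j σ ∧ r j σ = r j σ' then w j else 0) :
    IsReversible μ M := by
  refine fun σ σ' => ?_
  rw [hM, hM]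
  refine sum_congr rfl fun j _ => if_congr ?_ rfl rfl
  exact ⟨fun h => ⟨hG j σ σ' h.2 h.1, h.2.symm⟩, fun h => ⟨hG j σ' σ h.2 h.1, h.2.symm⟩⟩

lemma isPosSemidefIn_of_mul_eq_sum [Fintype Ω] {μ : Ω → ℝ} {M : Matrix Ω Ω ℝ}
    (r : ∀ j, Ω → B j) (w : J → ℝ) (hw : ∀ j, 0 ≤ w j)
    (hG : ∀ j σ σ', r j σ = r j σ' → G j σ → G j σ')
    (hM : ∀ σ σ', μ σ * M σ σ' = ∑ j, if G j σ ∧ r j σ = r j σ' then w j else 0) :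
    IsPosSemidefIn μ M := by
  refine fun f => ?_
  set g : J → Ω → ℝ := fun j σ => if G j σ then f σ else 0
  have hterm : ∀ j σ σ', (if G j σ ∧ r j σ = r j σ' then w j else 0) * (f σ * f σ')
      = w j * if r j σ = r j σ' then g j σ * g j σ' else 0 := by
    intro j σ σ'
    by_cases hr : r j σ = r j σ'
    · by_cases hg : G j σ
      · simp [g, hr, hg, hG j σ σ' hr hg]
      · simp [g, hr, hg]
    · simp [hr]
  calc 0 ≤ ∑ j, w j * ∑ σ, ∑ σ', if r j σ = r j σ' then g j σ * g j σ' else 0 :=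
        sum_nonneg fun j _ => mul_nonneg (hw j) (sum_sum_ite_eq_mul_nonneg (r j) (g j))
    _ = ∑ σ, ∑ σ', μ σ * M σ σ' * (f σ * f σ') := by
      simp_rw [hM, Finset.sum_mul, hterm, Finset.mul_sum]
      rw [Finset.sum_comm]
      exact sum_congr rfl fun _ _ => Finset.sum_comm
    _ = innerMu μ f (M.mulVec f) := by
      simp only [innerMu, Matrix.mulVec, dotProduct, Finset.mul_sum, Finset.sum_mul]
      exact sum_congr rfl fun _ _ => sum_congr rfl fun _ _ => by ring

end ReversibleKernel

section Potts

variable {d q : ℕ} {V : Finset (Vtx d)}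

lemma latAdj_irrefl (u : Vtx d) : ¬latAdj u u := by
  simp [latAdj, latDist]

lemma latAdj_comm {u v : Vtx d} : latAdj u v ↔ latAdj v u := by
  simp only [latAdj, latDist, ← Int.natAbs_neg (u _ - v _), neg_sub]

lemma mem_monoEdges {σ : Conf V q} {e : Sym2 {x // x ∈ V}} :
    e ∈ monoEdges σ ↔ ∃ u v : {x // x ∈ V}, e = s(u, v) ∧ latAdj u.1 v.1 ∧ σ u = σ v := by
  simp [monoEdges]

def monoGraph (σ : Conf V q) : SimpleGraph {x // x ∈ V} where
  Adj u v := latAdj u.1 v.1 ∧ σ u = σ v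
  symm := ⟨fun _ _ h => ⟨latAdj_comm.1 h.1, h.2.symm⟩⟩
  loopless := ⟨fun u h => latAdj_irrefl u.1 h.1⟩

lemma edgeFinset_monoGraph (σ : Conf V q) : (monoGraph σ).edgeFinset = monoEdges σ := by
  ext e
  induction e using Sym2.ind with
  | _ u v =>
    rw [SimpleGraph.mem_edgeFinset, SimpleGraph.mem_edgeSet, mem_monoEdges]
    constructor
    · exact fun h => ⟨u, v, rfl, h⟩
    · rintro ⟨u', v', he, h⟩
      rcases Sym2.eq_iff.1 he with ⟨rfl, rfl⟩ | ⟨rfl, rfl⟩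
      · exact h
      · exact (monoGraph σ).symm.symm _ _ h

lemma pottsWeight_eq (β : ℝ) (σ : Conf V q) :
    pottsWeight q β σ = Real.exp (β * (monoEdges σ).card) := by
  have hdeg : ∀ u, (∑ v : {x // x ∈ V}, if latAdj u.1 v.1 ∧ σ u = σ v then (1 : ℝ) else 0)
      = (monoGraph σ).degree u := fun u => by
    rw [Finset.sum_boole, ← SimpleGraph.card_neighborFinset_eq_degree]
    congr 2
    ext v
    simp only [mem_filter, mem_univ, true_and, SimpleGraph.mem_neighborFinset]
    rfl
  rw [pottsWeight, sum_congr rfl fun u _ => hdeg u, ← Nat.cast_sum,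
    SimpleGraph.sum_degrees_eq_twice_card_edges, edgeFinset_monoGraph]
  push_cast
  ring_nf

lemma potts_eq (β : ℝ) (σ : Conf V q) :
    potts q β V σ =
      (∑ σ' : Conf V q, pottsWeight q β σ')⁻¹ * Real.exp (β * (monoEdges σ).card) := by
  rw [potts, div_eq_inv_mul, pottsWeight_eq]

lemma potts_nonneg (β : ℝ) (σ : Conf V q) : 0 ≤ potts q β V σ :=
  div_nonneg (Real.exp_pos _).le (sum_nonneg fun _ _ => (Real.exp_pos _).le)

lemma mem_isoVerts {A : Finset (Sym2 {x // x ∈ V})} {v : {x // x ∈ V}} :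
    v ∈ isoVerts A ↔ ∀ e ∈ A, v ∉ e := by
  simp [isoVerts]

lemma subset_monoEdges_of_eqOn {σ σ' : Conf V q} {A : Finset (Sym2 {x // x ∈ V})}
    (hA : A ⊆ monoEdges σ) (h : ∀ v ∉ isoVerts A, σ' v = σ v) : A ⊆ monoEdges σ' := by
  intro e he
  obtain ⟨u, v, rfl, hadj, hmono⟩ := mem_monoEdges.1 (hA he)
  have hu : u ∉ isoVerts A := fun hc => mem_isoVerts.1 hc _ he (Sym2.mem_mk_left u v)
  have hv : v ∉ isoVerts A := fun hc => mem_isoVerts.1 hc _ he (Sym2.mem_mk_right u v)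
  exact mem_monoEdges.2 ⟨u, v, rfl, hadj, by rw [h u hu, h v hv, hmono]⟩

lemma exp_mul_pow_mul_pow_sub (β : ℝ) {a m : ℕ} (h : a ≤ m) :
    Real.exp (β * m) * ((1 - Real.exp (-β)) ^ a * Real.exp (-β) ^ (m - a))
      = (Real.exp β - 1) ^ a := by
  obtain ⟨k, rfl⟩ := Nat.exists_eq_add_of_le h
  have hexp : Real.exp β * Real.exp (-β) = 1 := by
    rw [← Real.exp_add, add_neg_cancel, Real.exp_zero]
  have hp : Real.exp β * (1 - Real.exp (-β)) = Real.exp β - 1 := by rw [mul_sub, mul_one, hexp]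
  rw [Nat.add_sub_cancel_left, Nat.cast_add, mul_add, Real.exp_add, mul_comm β, mul_comm β,
    Real.exp_nat_mul, Real.exp_nat_mul]
  calc _ = (Real.exp β * (1 - Real.exp (-β))) ^ a * (Real.exp β * Real.exp (-β)) ^ k := by
        rw [mul_pow, mul_pow]; ring
    _ = _ := by rw [hp, hexp, one_pow, mul_one]

end Potts

section IsoDynamics

variable {d q : ℕ} {V : Finset (Vtx d)} {ι : Type*}

lemma subset_monoEdges_of_restrict_eq
    {c : (ι → Fin q) → Conf V q} {frozen : Finset (Sym2 {x // x ∈ V}) → ι → Prop}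
    (hc : ∀ A σ σ', (∀ i, frozen A i → σ' i = σ i) → ∀ v ∉ isoVerts A, c σ' v = c σ v)
    (A : Finset (Sym2 {x // x ∈ V})) (σ σ' : ι → Fin q)
    (h : Subtype.restrict (frozen A) σ = Subtype.restrict (frozen A) σ')
    (hA : A ⊆ monoEdges (c σ)) : A ⊆ monoEdges (c σ') :=
  subset_monoEdges_of_eqOn hA (hc A σ σ' fun i hi => (congrFun h ⟨i, hi⟩).symm)

variable [Fintype ι]

/-- A configuration `σ` of the updated region is read in `V` as `c σ` (the identity, or the
gluing with a fixed outside configuration); given the open edge set `A`, the coordinates `i`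
with `¬frozen A i` are resampled, each outcome having weight `q^{-n A}`. -/
noncomputable def isoDynamics (q : ℕ) (β : ℝ) (c : (ι → Fin q) → Conf V q)
    (frozen : Finset (Sym2 {x // x ∈ V}) → ι → Prop) (n : Finset (Sym2 {x // x ∈ V}) → ℕ) :
    Matrix (ι → Fin q) (ι → Fin q) ℝ :=
  Matrix.of fun σ σ' =>
    ∑ A ∈ (monoEdges (c σ)).powerset,
      (1 - Real.exp (-β)) ^ A.card * Real.exp (-β) ^ ((monoEdges (c σ)).card - A.card) *
        (if ∀ i, frozen A i → σ' i = σ i then ((q : ℝ) ^ n A)⁻¹ else 0)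

variable {β C : ℝ} {c : (ι → Fin q) → Conf V q}
  {frozen : Finset (Sym2 {x // x ∈ V}) → ι → Prop} {n : Finset (Sym2 {x // x ∈ V}) → ℕ}
  {μ : (ι → Fin q) → ℝ}

lemma mul_isoDynamics_apply (hμ : ∀ σ, μ σ = C * Real.exp (β * (monoEdges (c σ)).card))
    (σ σ' : ι → Fin q) :
    μ σ * isoDynamics q β c frozen n σ σ' =
      ∑ A, if A ⊆ monoEdges (c σ) ∧
          Subtype.restrict (frozen A) σ = Subtype.restrict (frozen A) σ'
        then C * ((Real.exp β - 1) ^ A.card * ((q : ℝ) ^ n A)⁻¹) else 0 := by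
  have hpow : (monoEdges (c σ)).powerset = univ.filter (· ⊆ monoEdges (c σ)) := by
    ext A; simp
  have hagree : ∀ A, (∀ i, frozen A i → σ' i = σ i) ↔
      Subtype.restrict (frozen A) σ = Subtype.restrict (frozen A) σ' := fun A => by
    simp only [funext_iff, Subtype.restrict, Subtype.forall, eq_comm]
  rw [hμ, isoDynamics, Matrix.of_apply, hpow, sum_filter, mul_assoc, Finset.mul_sum,
    Finset.mul_sum]
  refine sum_congr rfl fun A _ => ?_
  by_cases hA : A ⊆ monoEdges (c σ)
  · by_cases hag : ∀ i, frozen A i → σ' i = σ i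
    · rw [if_pos hA, if_pos hag, if_pos ⟨hA, (hagree A).1 hag⟩,
        ← exp_mul_pow_mul_pow_sub β (card_le_card hA)]
      ring
    · rw [if_pos hA, if_neg hag, if_neg fun h => hag ((hagree A).2 h.2)]
      ring
  · rw [if_neg hA, if_neg fun h => hA h.1]
    ring

lemma isoDynamics_isReversible
    (hμ : ∀ σ, μ σ = C * Real.exp (β * (monoEdges (c σ)).card))
    (hc : ∀ A σ σ', (∀ i, frozen A i → σ' i = σ i) → ∀ v ∉ isoVerts A, c σ' v = c σ v) :
    IsReversible μ (isoDynamics q β c frozen n) :=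
  isReversible_of_mul_eq_sum (fun A => Subtype.restrict (frozen A)) _
    (subset_monoEdges_of_restrict_eq hc) (mul_isoDynamics_apply hμ)

lemma isoDynamics_isPosSemidefIn [DecidableEq ι] (hβ : 0 ≤ β) (hC : 0 ≤ C)
    (hμ : ∀ σ, μ σ = C * Real.exp (β * (monoEdges (c σ)).card))
    (hc : ∀ A σ σ', (∀ i, frozen A i → σ' i = σ i) → ∀ v ∉ isoVerts A, c σ' v = c σ v) :
    IsPosSemidefIn μ (isoDynamics q β c frozen n) := by
  have hp : 0 ≤ Real.exp β - 1 := sub_nonneg.2 (Real.one_le_exp hβ)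
  exact isPosSemidefIn_of_mul_eq_sum (fun A => Subtype.restrict (frozen A)) _
    (fun A => by positivity) (subset_monoEdges_of_restrict_eq hc) (mul_isoDynamics_apply hμ)

end IsoDynamics

section PottsDynamics

variable {d q : ℕ} {β : ℝ} {V : Finset (Vtx d)}

lemma ISWmat_eq_isoDynamics :
    ISWmat q β V = isoDynamics q β id (fun A v => v ∉ isoVerts A)
      (fun A => (isoVerts A).card) := by
  ext σ σ'
  simp only [ISWmat, isoDynamics, Matrix.of_apply, id]

lemma IDmat_eq_smul_sum (L : ℕ) :
    IDmat q β V L = (((L : ℝ) + 3) ^ d)⁻¹ • ∑ x, isoDynamics q β id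
      (fun A v => ¬(v ∈ isoVerts A ∧ v.1 ∈ tile V L x))
      (fun A => ((isoVerts A).filter fun v => v.1 ∈ tile V L x).card) := by
  ext σ σ'
  simp only [IDmat, isoDynamics, Matrix.of_apply, Matrix.smul_apply, Matrix.sum_apply,
    smul_eq_mul, id]

lemma condIso_eq_isoDynamics (Bk : Finset (Vtx d)) (τ : {x // x ∈ V \ Bk} → Fin q) :
    condIso q β V Bk τ = isoDynamics q β (fun σ => glue V Bk σ τ)
      (fun A w => ¬∃ v ∈ isoVerts A, v.1 = w.1)
      (fun A => ((isoVerts A).filter fun v => v.1 ∈ Bk).card) := by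
  ext σ σ'
  simp only [condIso, isoDynamics, Matrix.of_apply]

lemma inv_sum_pottsWeight_nonneg (β : ℝ) : 0 ≤ (∑ σ : Conf V q, pottsWeight q β σ)⁻¹ :=
  inv_nonneg.2 (sum_nonneg fun _ _ => (Real.exp_pos _).le)

lemma pottsCond_eq (Bk : Finset (Vtx d)) (τ : {x // x ∈ V \ Bk} → Fin q)
    (σ : {x // x ∈ Bk} → Fin q) :
    pottsCond q β V Bk τ σ = ((∑ ρ : Conf V q, pottsWeight q β ρ)⁻¹ *
        (∑ σ', potts q β V (glue V Bk σ' τ))⁻¹) *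
      Real.exp (β * (monoEdges (glue V Bk σ τ)).card) := by
  rw [pottsCond, potts_eq, div_eq_mul_inv]
  ring

lemma glue_eq_of_eqOn {Bk : Finset (Vtx d)} {τ : {x // x ∈ V \ Bk} → Fin q}
    {A : Finset (Sym2 {x // x ∈ V})} {σ σ' : {x // x ∈ Bk} → Fin q}
    (h : ∀ w : {x // x ∈ Bk}, (¬∃ v ∈ isoVerts A, v.1 = w.1) → σ' w = σ w) :
    ∀ v ∉ isoVerts A, glue V Bk σ' τ v = glue V Bk σ τ v := by
  intro v hv
  unfold glue
  split_ifs with hb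
  · exact h ⟨v.1, hb⟩ fun ⟨u, hu, he⟩ => hv (Subtype.ext he ▸ hu)
  · rfl

lemma ISWmat_isReversible_isPosSemidefIn (hβ : 0 ≤ β) :
    IsReversible (potts q β V) (ISWmat q β V) ∧
      IsPosSemidefIn (potts q β V) (ISWmat q β V) := by
  rw [ISWmat_eq_isoDynamics]
  exact ⟨isoDynamics_isReversible (potts_eq β) fun _ _ _ h => h,
    isoDynamics_isPosSemidefIn hβ (inv_sum_pottsWeight_nonneg β) (potts_eq β)
      fun _ _ _ h => h⟩

lemma IDmat_isReversible_isPosSemidefIn (hβ : 0 ≤ β) (L : ℕ) :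
    IsReversible (potts q β V) (IDmat q β V L) ∧
      IsPosSemidefIn (potts q β V) (IDmat q β V L) := by
  rw [IDmat_eq_smul_sum]
  exact ⟨IsReversible.smul_sum _ _ fun x _ =>
      isoDynamics_isReversible (potts_eq β) fun _ _ _ h v hv => h v fun hv' => hv hv'.1,
    IsPosSemidefIn.smul_sum _ (by positivity) fun x _ =>
      isoDynamics_isPosSemidefIn hβ (inv_sum_pottsWeight_nonneg β) (potts_eq β)
        fun _ _ _ h v hv => h v fun hv' => hv hv'.1⟩

lemma condIso_isReversible_isPosSemidefIn (hβ : 0 ≤ β) (Bk : Finset (Vtx d))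
    (τ : {x // x ∈ V \ Bk} → Fin q) :
    IsReversible (pottsCond q β V Bk τ) (condIso q β V Bk τ) ∧
      IsPosSemidefIn (pottsCond q β V Bk τ) (condIso q β V Bk τ) := by
  have hC : 0 ≤ (∑ ρ : Conf V q, pottsWeight q β ρ)⁻¹ *
      (∑ σ', potts q β V (glue V Bk σ' τ))⁻¹ :=
    mul_nonneg (inv_sum_pottsWeight_nonneg β)
      (inv_nonneg.2 (sum_nonneg fun _ _ => potts_nonneg β _))
  rw [condIso_eq_isoDynamics]
  exact ⟨isoDynamics_isReversible (pottsCond_eq Bk τ) fun _ _ _ => glue_eq_of_eqOn,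
    isoDynamics_isPosSemidefIn hβ hC (pottsCond_eq Bk τ) fun _ _ _ => glue_eq_of_eqOn⟩

end PottsDynamics

theorem statement10_general (d q : ℕ) (β : ℝ) (hβ : 0 < β)
    (V : Finset (Vtx d)) (L : ℕ) :
    (∀ σ σ', potts q β V σ * ISWmat q β V σ σ' = potts q β V σ' * ISWmat q β V σ' σ) ∧
    (∀ f : Conf V q → ℝ, 0 ≤ innerMu (potts q β V) f ((ISWmat q β V).mulVec f)) ∧
    (∀ σ σ',
      potts q β V σ * IDmat q β V L σ σ' = potts q β V σ' * IDmat q β V L σ' σ) ∧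
    (∀ f : Conf V q → ℝ, 0 ≤ innerMu (potts q β V) f ((IDmat q β V L).mulVec f)) ∧
    (∀ (x : Fin d → Fin (L + 3)) (τ : {y // y ∈ V \ tile V L x} → Fin q),
      (∀ σ σ', pottsCond q β V (tile V L x) τ σ * condIso q β V (tile V L x) τ σ σ'
          = pottsCond q β V (tile V L x) τ σ' * condIso q β V (tile V L x) τ σ' σ) ∧
      (∀ f : ({y // y ∈ tile V L x} → Fin q) → ℝ,
        0 ≤ innerMu (pottsCond q β V (tile V L x) τ) f
          ((condIso q β V (tile V L x) τ).mulVec f))) := by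
  obtain ⟨hISW_rev, hISW_psd⟩ := ISWmat_isReversible_isPosSemidefIn (q := q) (V := V) hβ.le
  obtain ⟨hID_rev, hID_psd⟩ := IDmat_isReversible_isPosSemidefIn (q := q) (V := V) hβ.le L
  exact ⟨hISW_rev, hISW_psd, hID_rev, hID_psd,
    fun x τ => condIso_isReversible_isPosSemidefIn hβ.le (tile V L x) τ⟩

/-- (i) The isolated-vertices dynamics `I_SW` and the isolated-vertices tiled dynamics
`I_D` are reversible w.r.t. the Potts measure `π` and positive semidefinite in `L²(π)`;
(ii) for every tiling `B_k` and configuration `τ` on `V ∖ B_k`, the conditional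
isolated-vertices tiled dynamics `P_k^τ` is reversible w.r.t. `π(·|τ)` and positive
semidefinite in `L²(π(·|τ))`. -/
theorem statement10 (d q : ℕ) (β : ℝ) (hq : 2 ≤ q) (hβ : 0 < β)
    (V : Finset (Vtx d)) (hV : IsCube V) (L : ℕ) (hL : Odd L) :
    (∀ σ σ', potts q β V σ * ISWmat q β V σ σ' = potts q β V σ' * ISWmat q β V σ' σ) ∧
    (∀ f : Conf V q → ℝ, 0 ≤ innerMu (potts q β V) f ((ISWmat q β V).mulVec f)) ∧
    (∀ σ σ',
      potts q β V σ * IDmat q β V L σ σ' = potts q β V σ' * IDmat q β V L σ' σ) ∧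
    (∀ f : Conf V q → ℝ, 0 ≤ innerMu (potts q β V) f ((IDmat q β V L).mulVec f)) ∧
    (∀ (x : Fin d → Fin (L + 3)) (τ : {y // y ∈ V \ tile V L x} → Fin q),
      (∀ σ σ', pottsCond q β V (tile V L x) τ σ * condIso q β V (tile V L x) τ σ σ'
          = pottsCond q β V (tile V L x) τ σ' * condIso q β V (tile V L x) τ σ' σ) ∧
      (∀ f : ({y // y ∈ tile V L x} → Fin q) → ℝ,
        0 ≤ innerMu (pottsCond q β V (tile V L x) τ) f
          ((condIso q β V (tile V L x) τ).mulVec f))) :=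
  statement10_general d q β hβ V L
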